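/- arXiv:math/0307026 — 2 statements merged into one kernel-verified Lean document; each statement's English description precedes it below -/
import Mathlib

section
/- The matrix D(λ) = 1 − Σ_{i≠j} (γ/λ_{ij}) E_ii ⊗ E_jj + Σ_{i≠j} (γ/λ_{ij}) E_ij ⊗ E_ji satisfies the Gervais–Neveu–Felder dynamical Yang–Baxter equation D_{12}(λ+γh_3) D_{13}(λ) D_{23}(λ+γh_1) = D_{23}(λ) D_{13}(λ+γh_2) D_{12}(λ). -/
open Matrix Kronecker MvPolynomial

noncomputable section

/-- The field of rational functions in the variables `λ₁,…,λₙ`, `γ` and `γ̃`. -/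
abbrev KK (n : ℕ) : Type := FractionRing (MvPolynomial (Fin n ⊕ Bool) ℂ)

variable {n : ℕ}

/-- The generic point `λ`. -/
def lamG (n : ℕ) : Fin n → KK n :=
  fun i => algebraMap (MvPolynomial (Fin n ⊕ Bool) ℂ) (KK n) (X (Sum.inl i))

/-- The parameter `γ`. -/
def gamG (n : ℕ) : KK n :=
  algebraMap (MvPolynomial (Fin n ⊕ Bool) ℂ) (KK n) (X (Sum.inr true))

/-- The parameter `γ̃`. -/
def gamT (n : ℕ) : KK n :=
  algebraMap (MvPolynomial (Fin n ⊕ Bool) ℂ) (KK n) (X (Sum.inr false))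

/-- Elementary matrices `E i j`. -/
def EM (i j : Fin n) : Matrix (Fin n) (Fin n) (KK n) := single i j 1

/-- `A(λ) = 1 + Σ_{i≠j} (γ/λ_{ij}) (E_ii − E_ij) ⊗ (E_jj − E_ji)`. -/
def matA (l : Fin n → KK n) : Matrix (Fin n × Fin n) (Fin n × Fin n) (KK n) :=
  1 + ∑ i, ∑ j, if i ≠ j then
    (gamG n / (l i - l j)) • ((EM i i - EM i j) ⊗ₖ (EM j j - EM j i)) else 0

/-- `B(λ) = 1 + Σ_{i≠j} (γ/(λ_{ij}−γ)) E_jj ⊗ (E_ii − E_ij)`. -/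
def matB (l : Fin n → KK n) : Matrix (Fin n × Fin n) (Fin n × Fin n) (KK n) :=
  1 + ∑ i, ∑ j, if i ≠ j then
    (gamG n / (l i - l j - gamG n)) • (EM j j ⊗ₖ (EM i i - EM i j)) else 0

/-- conjugation by the flip `π` of the two tensor factors. -/
def flipM {α : Type} (M : Matrix (Fin n × Fin n) (Fin n × Fin n) α) :
    Matrix (Fin n × Fin n) (Fin n × Fin n) α :=
  Matrix.of fun p q => M p.swap q.swap

/-- `C = B^π`. -/
def matC (l : Fin n → KK n) : Matrix (Fin n × Fin n) (Fin n × Fin n) (KK n) :=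
  flipM (matB l)

/-- `D(λ) = 1 − Σ_{i≠j} (γ/λ_{ij}) E_ii ⊗ E_jj + Σ_{i≠j} (γ/λ_{ij}) E_ij ⊗ E_ji`. -/
def matD (l : Fin n → KK n) : Matrix (Fin n × Fin n) (Fin n × Fin n) (KK n) :=
  1 - (∑ i, ∑ j, if i ≠ j then (gamG n / (l i - l j)) • (EM i i ⊗ₖ EM j j) else 0)
    + ∑ i, ∑ j, if i ≠ j then (gamG n / (l i - l j)) • (EM i j ⊗ₖ EM j i) else 0

/-- the shift `λ ↦ λ + γ e_k`. -/
def lsh {S : Type} [AddMonoid S] (g : S) (l : Fin n → S) (k : Fin n) : Fin n → S :=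
  fun m => l m + if m = k then g else 0

/-- `M_{12}` on `V⊗V⊗V`. -/
def op12 {α : Type} [Zero α] (M : Matrix (Fin n × Fin n) (Fin n × Fin n) α) :
    Matrix (Fin n × Fin n × Fin n) (Fin n × Fin n × Fin n) α :=
  Matrix.of fun p q => if p.2.2 = q.2.2 then M (p.1, p.2.1) (q.1, q.2.1) else 0

/-- `M_{13}` on `V⊗V⊗V`. -/
def op13 {α : Type} [Zero α] (M : Matrix (Fin n × Fin n) (Fin n × Fin n) α) :
    Matrix (Fin n × Fin n × Fin n) (Fin n × Fin n × Fin n) α :=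
  Matrix.of fun p q => if p.2.1 = q.2.1 then M (p.1, p.2.2) (q.1, q.2.2) else 0

/-- `M_{23}` on `V⊗V⊗V`. -/
def op23 {α : Type} [Zero α] (M : Matrix (Fin n × Fin n) (Fin n × Fin n) α) :
    Matrix (Fin n × Fin n × Fin n) (Fin n × Fin n × Fin n) α :=
  Matrix.of fun p q => if p.1 = q.1 then M (p.2.1, p.2.2) (q.2.1, q.2.2) else 0

/-- `M_{12}(λ+γh₃)` on `V⊗V⊗V`. -/
def op12sh3 {S α : Type} [AddMonoid S] [Zero α] (g : S)
    (F : (Fin n → S) → Matrix (Fin n × Fin n) (Fin n × Fin n) α) (l : Fin n → S) :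
    Matrix (Fin n × Fin n × Fin n) (Fin n × Fin n × Fin n) α :=
  Matrix.of fun p q => if p.2.2 = q.2.2 then F (lsh g l q.2.2) (p.1, p.2.1) (q.1, q.2.1) else 0

/-- `M_{13}(λ+γh₂)` on `V⊗V⊗V`. -/
def op13sh2 {S α : Type} [AddMonoid S] [Zero α] (g : S)
    (F : (Fin n → S) → Matrix (Fin n × Fin n) (Fin n × Fin n) α) (l : Fin n → S) :
    Matrix (Fin n × Fin n × Fin n) (Fin n × Fin n × Fin n) α :=
  Matrix.of fun p q => if p.2.1 = q.2.1 then F (lsh g l q.2.1) (p.1, p.2.2) (q.1, q.2.2) else 0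

/-- `M_{23}(λ+γh₁)` on `V⊗V⊗V`. -/
def op23sh1 {S α : Type} [AddMonoid S] [Zero α] (g : S)
    (F : (Fin n → S) → Matrix (Fin n × Fin n) (Fin n × Fin n) α) (l : Fin n → S) :
    Matrix (Fin n × Fin n × Fin n) (Fin n × Fin n × Fin n) α :=
  Matrix.of fun p q => if p.1 = q.1 then F (lsh g l q.1) (p.2.1, p.2.2) (q.2.1, q.2.2) else 0


/-!
Each row of `D(λ)` has at most two nonzero entries: `1 - w_ab` on the diagonal and `w_ab` in
the column `(b, a)`, where `w_ab = γ / λ_ab`. Hence the row `(a, b, c)` of either side of the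
equation is supported on the permutations of `(a, b, c)`, and the equation becomes a handful of
scalar identities between the weights. If `a, b, c` are distinct, the shifts by `γ h_k` do not
touch any weight that occurs, and the identities follow from `w_ba = -w_ab` and
`w_ab w_bc + w_bc w_ca + w_ca w_ab = 0`. If two of the indices coincide, the shifted weight
`w⁺ = γ / (λ_ab + γ)` enters, and `1 / w⁺ = 1 / w + 1`, i.e. `w - w⁺ = w w⁺`, is what is needed.
All of this works over any field as soon as `λ_i ≠ λ_j` and `λ_i - λ_j ≠ γ` for `i ≠ j`, which
holds at the generic point.
-/

@[simp] lemma lsh_apply_self {S : Type} [AddMonoid S] (g : S) (l : Fin n → S) (k : Fin n) :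
    lsh g l k k = l k + g := by
  simp [lsh]

lemma lsh_apply_of_ne {S : Type} [AddMonoid S] (g : S) (l : Fin n → S) {k m : Fin n}
    (h : m ≠ k) : lsh g l k m = l m := by
  simp [lsh, h]

lemma Matrix.mul_apply_of_row_eq_ite_add_ite {R ι : Type*} [Fintype ι] [DecidableEq ι]
    [NonUnitalNonAssocSemiring R] {A : Matrix ι ι R} {p w₁ w₂ : ι} {c₁ c₂ : R}
    (h : ∀ r, A p r = (if r = w₁ then c₁ else 0) + (if r = w₂ then c₂ else 0))
    (B : Matrix ι ι R) (q : ι) :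
    (A * B) p q = c₁ * B w₁ q + c₂ * B w₂ q := by
  simp [Matrix.mul_apply, h, add_mul, ite_mul, Finset.sum_add_distrib]

section RSMatrix

variable {K : Type} [Field K]

/-- `γ / λ_ab`; the convention `x / 0 = 0` makes it vanish for `a = b`. -/
def rsWeight (γ : K) (l : Fin n → K) (a b : Fin n) : K := γ / (l a - l b)

def rsMatrix (γ : K) (l : Fin n → K) : Matrix (Fin n × Fin n) (Fin n × Fin n) K :=
  of fun p q => (if q = p then 1 - rsWeight γ l p.1 p.2 else 0)
    + (if q = p.swap then rsWeight γ l p.1 p.2 else 0)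

@[simp] lemma rsWeight_self (γ : K) (l : Fin n → K) (a : Fin n) : rsWeight γ l a a = 0 := by
  simp [rsWeight]

lemma rsWeight_swap (γ : K) (l : Fin n → K) (a b : Fin n) :
    rsWeight γ l b a = -rsWeight γ l a b := by
  rw [rsWeight, rsWeight, ← neg_sub, div_neg]

lemma rsWeight_cyclic_sum_eq_zero (γ : K) {l : Fin n → K} {a b c : Fin n} (hab : l a ≠ l b)
    (hbc : l b ≠ l c) (hca : l c ≠ l a) :
    rsWeight γ l a b * rsWeight γ l b c + rsWeight γ l b c * rsWeight γ l c a
      + rsWeight γ l c a * rsWeight γ l a b = 0 := by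
  rw [← sub_ne_zero] at hab hbc hca
  simp only [rsWeight]
  field_simp
  ring

lemma rsWeight_lsh_of_ne (γ : K) (l : Fin n → K) {a b k : Fin n} (ha : a ≠ k) (hb : b ≠ k) :
    rsWeight γ (lsh γ l k) a b = rsWeight γ l a b := by
  simp [rsWeight, lsh_apply_of_ne, ha, hb]

lemma rsWeight_sub_rsWeight_lsh (γ : K) {l : Fin n → K} {a b : Fin n} (h : l a ≠ l b)
    (hγ : l b - l a ≠ γ) :
    rsWeight γ l a b - rsWeight γ (lsh γ l a) a b =
      rsWeight γ l a b * rsWeight γ (lsh γ l a) a b := by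
  have hab : a ≠ b := fun e => h (congrArg l e)
  rw [← sub_ne_zero] at h
  have h' : l a + γ - l b ≠ 0 := fun e => hγ (by linear_combination -e)
  simp only [rsWeight, lsh_apply_self, lsh_apply_of_ne _ _ hab.symm]
  field_simp
  ring

variable (γ : K) (l : Fin n → K) (a b c : Fin n) (r : Fin n × Fin n × Fin n)

lemma op12sh3_rsMatrix_apply :
    op12sh3 γ (rsMatrix γ) l (a, b, c) r =
      (if r = (a, b, c) then 1 - rsWeight γ (lsh γ l c) a b else 0)
        + (if r = (b, a, c) then rsWeight γ (lsh γ l c) a b else 0) := by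
  obtain ⟨x, y, z⟩ := r
  simp only [op12sh3, rsMatrix, of_apply, Prod.mk.injEq, Prod.swap_prod_mk]
  grind

lemma op13_rsMatrix_apply :
    op13 (rsMatrix γ l) (a, b, c) r =
      (if r = (a, b, c) then 1 - rsWeight γ l a c else 0)
        + (if r = (c, b, a) then rsWeight γ l a c else 0) := by
  obtain ⟨x, y, z⟩ := r
  simp only [op13, rsMatrix, of_apply, Prod.mk.injEq, Prod.swap_prod_mk]
  grind

lemma op23sh1_rsMatrix_apply :
    op23sh1 γ (rsMatrix γ) l (a, b, c) r =
      (if r = (a, b, c) then 1 - rsWeight γ (lsh γ l a) b c else 0)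
        + (if r = (a, c, b) then rsWeight γ (lsh γ l a) b c else 0) := by
  obtain ⟨x, y, z⟩ := r
  simp only [op23sh1, rsMatrix, of_apply, Prod.mk.injEq, Prod.swap_prod_mk]
  grind

lemma op23_rsMatrix_apply :
    op23 (rsMatrix γ l) (a, b, c) r =
      (if r = (a, b, c) then 1 - rsWeight γ l b c else 0)
        + (if r = (a, c, b) then rsWeight γ l b c else 0) := by
  obtain ⟨x, y, z⟩ := r
  simp only [op23, rsMatrix, of_apply, Prod.mk.injEq, Prod.swap_prod_mk]
  grind

lemma op13sh2_rsMatrix_apply :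
    op13sh2 γ (rsMatrix γ) l (a, b, c) r =
      (if r = (a, b, c) then 1 - rsWeight γ (lsh γ l b) a c else 0)
        + (if r = (c, b, a) then rsWeight γ (lsh γ l b) a c else 0) := by
  obtain ⟨x, y, z⟩ := r
  simp only [op13sh2, rsMatrix, of_apply, Prod.mk.injEq, Prod.swap_prod_mk]
  grind

lemma op12_rsMatrix_apply :
    op12 (rsMatrix γ l) (a, b, c) r =
      (if r = (a, b, c) then 1 - rsWeight γ l a b else 0)
        + (if r = (b, a, c) then rsWeight γ l a b else 0) := by
  obtain ⟨x, y, z⟩ := r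
  simp only [op12, rsMatrix, of_apply, Prod.mk.injEq, Prod.swap_prod_mk]
  grind

end RSMatrix

theorem rsMatrix_dynamical_yang_baxter {K : Type} [Field K] (γ : K) (l : Fin n → K)
    (hinj : Function.Injective l) (hγ : ∀ i j, i ≠ j → l i - l j ≠ γ) :
    op12sh3 γ (rsMatrix γ) l * op13 (rsMatrix γ l) * op23sh1 γ (rsMatrix γ) l =
      op23 (rsMatrix γ l) * op13sh2 γ (rsMatrix γ) l * op12 (rsMatrix γ l) := by
  ext ⟨a, b, c⟩ q
  rw [Matrix.mul_assoc, Matrix.mul_assoc,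
    mul_apply_of_row_eq_ite_add_ite (op12sh3_rsMatrix_apply γ l a b c),
    mul_apply_of_row_eq_ite_add_ite (op13_rsMatrix_apply γ l a b c),
    mul_apply_of_row_eq_ite_add_ite (op13_rsMatrix_apply γ l b a c),
    mul_apply_of_row_eq_ite_add_ite (op23_rsMatrix_apply γ l a b c),
    mul_apply_of_row_eq_ite_add_ite (op13sh2_rsMatrix_apply γ l a b c),
    mul_apply_of_row_eq_ite_add_ite (op13sh2_rsMatrix_apply γ l a c b),
    op23sh1_rsMatrix_apply, op23sh1_rsMatrix_apply, op23sh1_rsMatrix_apply,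
    op23sh1_rsMatrix_apply, op12_rsMatrix_apply, op12_rsMatrix_apply, op12_rsMatrix_apply,
    op12_rsMatrix_apply]
  rcases eq_or_ne a b with rfl | hab
  · rcases eq_or_ne a c with rfl | hac
    · simp
    have hshift := rsWeight_sub_rsWeight_lsh γ (hinj.ne hac) (hγ _ _ hac.symm)
    simp only [rsWeight_self]
    split_ifs <;> grind [rsWeight_swap]
  rcases eq_or_ne a c with rfl | hac
  · have hshift := rsWeight_sub_rsWeight_lsh γ (hinj.ne hab) (hγ _ _ hab.symm)
    simp only [rsWeight_self]
    split_ifs <;> grind [rsWeight_swap]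
  rcases eq_or_ne b c with rfl | hbc
  · have hshift := rsWeight_sub_rsWeight_lsh γ (hinj.ne hab.symm) (hγ _ _ hab)
    simp only [rsWeight_self]
    split_ifs <;> grind [rsWeight_swap]
  rw [rsWeight_lsh_of_ne γ l hac hbc, rsWeight_lsh_of_ne γ l hab.symm hac.symm,
    rsWeight_lsh_of_ne γ l hbc hac, rsWeight_lsh_of_ne γ l hab hbc.symm]
  have hcyc := rsWeight_cyclic_sum_eq_zero γ (hinj.ne hab) (hinj.ne hbc) (hinj.ne hac.symm)
  split_ifs <;> grind [rsWeight_swap]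

lemma matD_eq_rsMatrix : matD (n := n) = rsMatrix (gamG n) := by
  funext l
  have drop_diagonal : ∀ M : Fin n → Fin n → Matrix (Fin n × Fin n) (Fin n × Fin n) (KK n),
      (∑ i, ∑ j, if i ≠ j then (gamG n / (l i - l j)) • M i j else 0)
        = ∑ i, ∑ j, rsWeight (gamG n) l i j • M i j := by
    intro M
    refine Finset.sum_congr rfl fun i _ => Finset.sum_congr rfl fun j _ => ?_
    split_ifs with h
    · rfl
    · simp [not_not.mp h]
  ext ⟨a, b⟩ ⟨c, d⟩
  simp only [matD, drop_diagonal, EM, single_kronecker_single, rsMatrix]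
  simp only [Matrix.sub_apply, Matrix.add_apply, Matrix.one_apply, Matrix.sum_apply,
    Matrix.smul_apply, single_apply, of_apply, Prod.mk.injEq, Prod.swap_prod_mk, smul_eq_mul,
    mul_ite, mul_one, mul_zero, ite_and, Finset.sum_ite_eq', Finset.sum_ite_irrel,
    Finset.mem_univ, if_true, Finset.sum_const_zero]
  split_ifs <;> subst_vars <;> simp_all

lemma lamG_injective : Function.Injective (lamG n) :=
  (IsFractionRing.injective _ _).comp ((X_injective (R := ℂ)).comp Sum.inl_injective)

lemma lamG_sub_lamG_ne_gamG {i j : Fin n} (h : i ≠ j) : lamG n i - lamG n j ≠ gamG n := by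
  rw [Ne, ← sub_eq_zero, lamG, lamG, gamG, ← map_sub, ← map_sub,
    map_eq_zero_iff _ (IsFractionRing.injective _ _)]
  intro h0
  simpa [h.symm] using congrArg (eval fun w => if w = Sum.inl i then (1 : ℂ) else 0) h0

/-- the rational RS matrix `D` satisfies the Gervais–Neveu–Felder
dynamical Yang–Baxter equation
`D₁₂(λ+γh₃) D₁₃(λ) D₂₃(λ+γh₁) = D₂₃(λ) D₁₃(λ+γh₂) D₁₂(λ)`. -/
theorem statement1 (n : ℕ) :
    op12sh3 (gamG n) matD (lamG n) * op13 (matD (lamG n)) *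
        op23sh1 (gamG n) matD (lamG n) =
      op23 (matD (lamG n)) * op13sh2 (gamG n) matD (lamG n) *
        op12 (matD (lamG n)) := by
  rw [matD_eq_rsMatrix]
  exact rsMatrix_dynamical_yang_baxter _ _ lamG_injective fun _ _ => lamG_sub_lamG_ne_gamG
end
end

section
/- The matrix D(λ) = 1 − Σ_{i≠j} (γ/λ_{ij}) E_ii ⊗ E_jj + Σ_{i≠j} (γ/λ_{ij}) E_ij ⊗ E_ji satisfies D_{21}(λ) = D_{12}(λ)^{-1}. -/
open Matrix Kronecker MvPolynomial

noncomputable section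

variable {n : ℕ}

/-!
Put `c i j = γ / λᵢⱼ`, which is antisymmetric, and `N = Σ_{i,j} c i j (E_ij ⊗ E_ji − E_ii ⊗ E_jj)`,
so that `D = 1 + N`. Conjugating by the flip and relabelling `i ↔ j` turns `N` into `−N`.
Moreover `N² = 0`: by antisymmetry `N` maps every vector to a flip-symmetric one and kills
flip-symmetric vectors. Hence `D₂₁ = 1 − N = (1 + N)⁻¹`.
-/

section Exchange

variable {ι R : Type*} [Fintype ι] [DecidableEq ι] [CommRing R]

/-- Entrywise form of `Σ_{i,j} c i j • (E_ij ⊗ E_ji − E_ii ⊗ E_jj)`. -/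
def exchangeMatrix (c : ι → ι → R) : Matrix (ι × ι) (ι × ι) R :=
  Matrix.of fun p q => c p.1 p.2 * ((if q = p.swap then 1 else 0) - if q = p then 1 else 0)

lemma exchangeMatrix_mul_self {c : ι → ι → R} (hc : ∀ i j, c j i = -c i j) :
    exchangeMatrix c * exchangeMatrix c = 0 := by
  ext p q
  have row : ∀ r, exchangeMatrix c p r =
      c p.1 p.2 * ((if r = p.swap then 1 else 0) - if r = p then 1 else 0) := fun _ => rfl
  calc (exchangeMatrix c * exchangeMatrix c) p q
      = c p.1 p.2 * (exchangeMatrix c p.swap q - exchangeMatrix c p q) := by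
        simp only [mul_apply, row, mul_sub, sub_mul, mul_ite, mul_one, mul_zero, ite_mul, zero_mul,
          Finset.sum_sub_distrib, Finset.sum_ite_eq', Finset.mem_univ, if_true]
    _ = 0 := by
        simp only [exchangeMatrix, of_apply, Prod.fst_swap, Prod.snd_swap, Prod.swap_swap,
          hc p.1 p.2]
        ring

lemma sum_smul_single_kronecker_single_diag_apply (f : ι → ι → R) (p q : ι × ι) :
    (∑ i, ∑ j, f i j • (single i i (1 : R) ⊗ₖ single j j 1)) p q =
      if q = p then f p.1 p.2 else 0 := by
  obtain ⟨a, b⟩ := p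
  obtain ⟨c, d⟩ := q
  simp only [Matrix.sum_apply, Matrix.smul_apply, kroneckerMap_apply, single_apply, smul_eq_mul]
  rw [Finset.sum_eq_single a (fun x _ hx => by simp [hx]) (by simp),
    Finset.sum_eq_single b (fun y _ hy => by simp [hy]) (by simp)]
  by_cases hc : c = a <;> by_cases hd : d = b <;> simp_all [eq_comm]

lemma sum_smul_single_kronecker_single_swap_apply (f : ι → ι → R) (p q : ι × ι) :
    (∑ i, ∑ j, f i j • (single i j (1 : R) ⊗ₖ single j i 1)) p q =
      if q = p.swap then f p.1 p.2 else 0 := by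
  obtain ⟨a, b⟩ := p
  obtain ⟨c, d⟩ := q
  simp only [Matrix.sum_apply, Matrix.smul_apply, kroneckerMap_apply, single_apply, smul_eq_mul]
  rw [Finset.sum_eq_single a (fun x _ hx => by simp [hx]) (by simp),
    Finset.sum_eq_single b (fun y _ hy => by simp [hy]) (by simp)]
  by_cases hc : c = b <;> by_cases hd : d = a <;> simp_all [eq_comm]

lemma one_sub_eq_inv_one_add {N : Matrix ι ι R} (hN : N * N = 0) : 1 - N = (1 + N)⁻¹ :=
  (inv_eq_right_inv (by rw [add_mul, mul_sub, mul_sub, hN]; noncomm_ring)).symm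

end Exchange

lemma flipM_add {α : Type} [Add α] (A B : Matrix (Fin n × Fin n) (Fin n × Fin n) α) :
    flipM (A + B) = flipM A + flipM B :=
  rfl

lemma flipM_one {α : Type} [Zero α] [One α] :
    flipM (1 : Matrix (Fin n × Fin n) (Fin n × Fin n) α) = 1 :=
  submatrix_one _ Prod.swap_injective

lemma flipM_exchangeMatrix {R : Type} [CommRing R] {c : Fin n → Fin n → R}
    (hc : ∀ i j, c j i = -c i j) : flipM (exchangeMatrix c) = -exchangeMatrix c := by
  ext p q
  simp only [flipM, exchangeMatrix, of_apply, Matrix.neg_apply, hc p.1 p.2, Prod.fst_swap,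
    Prod.snd_swap, Prod.swap_inj, neg_mul]

lemma flipM_one_add_exchangeMatrix {R : Type} [CommRing R] {c : Fin n → Fin n → R}
    (hc : ∀ i j, c j i = -c i j) : flipM (1 + exchangeMatrix c) = 1 - exchangeMatrix c := by
  rw [flipM_add, flipM_one, flipM_exchangeMatrix hc, sub_eq_add_neg]

lemma matD_eq_one_add_exchangeMatrix (l : Fin n → KK n) :
    matD l = 1 + exchangeMatrix fun i j => gamG n / (l i - l j) := by
  ext p q
  simp only [matD, EM, ← ite_zero_smul]
  rw [Matrix.add_apply, Matrix.sub_apply, sum_smul_single_kronecker_single_diag_apply,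
    sum_smul_single_kronecker_single_swap_apply, Matrix.add_apply, exchangeMatrix, of_apply]
  by_cases hp : p.1 = p.2
  -- on the diagonal `exchangeMatrix` vanishes, whatever the junk value `γ / 0`
  · have hswap : p.swap = p := Prod.ext hp.symm hp
    simp only [hp, hswap, ne_eq, not_true_eq_false, if_false, ite_self, sub_self, mul_zero,
      sub_zero, add_zero]
  · simp only [hp, ne_eq, not_false_eq_true, if_true]
    split_ifs <;> ring

/-- the rational RS matrix `D` satisfies `D₂₁(λ) = D₁₂(λ)⁻¹`,
where `D₂₁ = π D₁₂ π`. -/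
theorem statement5 (n : ℕ) :
    flipM (matD (lamG n)) = (matD (lamG n))⁻¹ := by
  have hc : ∀ i j, gamG n / (lamG n j - lamG n i) = -(gamG n / (lamG n i - lamG n j)) := by
    intro i j
    rw [← neg_sub]
    exact div_neg (gamG n)
  rw [matD_eq_one_add_exchangeMatrix, flipM_one_add_exchangeMatrix hc]
  exact one_sub_eq_inv_one_add (exchangeMatrix_mul_self hc)
end
end
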